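/- arXiv:1911.07717 — 3 statements merged into one kernel-verified Lean document; each statement's English description precedes it below -/
import Mathlib

section
/- Let 𝔫 be a finite-dimensional real nilpotent Lie algebra and L : 𝔫 → 𝔫 a hyperbolic Lie algebra automorphism admitting a real eigenbasis and having sorted spectrum. Then [𝔫^s, 𝔫^u] = 0, and consequently 𝔫 = 𝔫^s ⊕ 𝔫^u as a direct sum of Lie algebras (both 𝔫^s and 𝔫^u are ideals of 𝔫 and 𝔫 is their internal direct sum). -/
/-!
Let `v`, `w` be eigenvectors with eigenvalues `a`, `b`, where `|a| < 1 < |b|`, and suppose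
`⁅v, w⁆ ≠ 0`. Then `⁅v, w⁆` is an eigenvector with eigenvalue `ab`, lying strictly deeper in the
lower central series than `v` and than `w`, and `|ab| ≠ 1` by hyperbolicity. If `|ab| > 1`, the
sorted unstable spectrum compares `⁅v, w⁆` with `w` and gives `|b| < |ab|`, i.e. `|a| > 1`. If
`|ab| < 1`, the same argument for `L⁻¹`, comparing `⁅w, v⁆` with `v`, gives `|b| < 1`.
Bilinearity extends `⁅v, w⁆ = 0` to the spans. The eigenbasis splits into stable and unstable
vectors, so `𝔫 = 𝔫^s + 𝔫^u`, and then `[𝔫, 𝔫^s] = [𝔫^s, 𝔫^s] ⊆ 𝔫^s`, likewise for `𝔫^u`. The sum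
is direct because eigenspaces for distinct eigenvalues are independent.
-/

/-- The span of all brackets `⁅x, y⁆` with `x ∈ A`, `y ∈ B`. -/
def bracketSpan {𝔫 : Type*} [LieRing 𝔫] [LieAlgebra ℝ 𝔫] (A B : Submodule ℝ 𝔫) :
    Submodule ℝ 𝔫 :=
  Submodule.span ℝ {z : 𝔫 | ∃ x ∈ A, ∃ y ∈ B, z = ⁅x, y⁆}

/-- The lower central series of a subalgebra `A` (as a submodule of `𝔫`), 0-indexed:
`lcsOf A i` is the paper's `A^{i+1}`, so `lcsOf A 0 = A = A¹` and
`A^{i+1} = ⁅A, A^i⁆`. -/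
def lcsOf {𝔫 : Type*} [LieRing 𝔫] [LieAlgebra ℝ 𝔫] (A : Submodule ℝ 𝔫) :
    ℕ → Submodule ℝ 𝔫
  | 0 => A
  | (i + 1) => bracketSpan A (lcsOf A i)

/-- `v` is an eigenvector of `L` (with some real eigenvalue). -/
def IsEigvec {𝔫 : Type*} [LieRing 𝔫] [LieAlgebra ℝ 𝔫] (L : 𝔫 ≃ₗ⁅ℝ⁆ 𝔫) (v : 𝔫) : Prop :=
  v ≠ 0 ∧ ∃ c : ℝ, L v = c • v

/-- The `L`-grading of the subalgebra `A ⊆ 𝔫`: for `i ≥ 1` the `i`-th piece is the span of the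
eigenvectors of `L` lying in `A^i` but not in `A^{i+1}`; the (unused) `0`-th piece is `⊥`.
The paper's `𝔫_(i)` is `grading L ⊤ i`. -/
def grading {𝔫 : Type*} [LieRing 𝔫] [LieAlgebra ℝ 𝔫] (L : 𝔫 ≃ₗ⁅ℝ⁆ 𝔫) (A : Submodule ℝ 𝔫) :
    ℕ → Submodule ℝ 𝔫
  | 0 => ⊥
  | (i + 1) => Submodule.span ℝ
      {v : 𝔫 | IsEigvec L v ∧ v ∈ lcsOf A i ∧ v ∉ lcsOf A (i + 1)}

/-- `L` admits a basis of real eigenvectors. -/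
def HasRealEigenbasis {𝔫 : Type*} [LieRing 𝔫] [LieAlgebra ℝ 𝔫] (L : 𝔫 ≃ₗ⁅ℝ⁆ 𝔫) : Prop :=
  ∃ (n : ℕ) (b : Module.Basis (Fin n) ℝ 𝔫) (c : Fin n → ℝ), ∀ i, L (b i) = c i • b i

/-- The unstable subspace `𝔫^u`: the span of the eigenvectors of `L` whose eigenvalue has
modulus `> 1`. -/
def unstable {𝔫 : Type*} [LieRing 𝔫] [LieAlgebra ℝ 𝔫] (L : 𝔫 ≃ₗ⁅ℝ⁆ 𝔫) : Submodule ℝ 𝔫 :=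
  Submodule.span ℝ {v : 𝔫 | v ≠ 0 ∧ ∃ c : ℝ, L v = c • v ∧ 1 < |c|}

/-- The stable subspace `𝔫^s`: the span of the eigenvectors of `L` whose eigenvalue has
modulus `< 1`. -/
def stable {𝔫 : Type*} [LieRing 𝔫] [LieAlgebra ℝ 𝔫] (L : 𝔫 ≃ₗ⁅ℝ⁆ 𝔫) : Submodule ℝ 𝔫 :=
  Submodule.span ℝ {v : 𝔫 | v ≠ 0 ∧ ∃ c : ℝ, L v = c • v ∧ |c| < 1}

/-- `L` is hyperbolic: no eigenvalue has modulus `1`. -/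
def IsHyperbolic {𝔫 : Type*} [LieRing 𝔫] [LieAlgebra ℝ 𝔫] (L : 𝔫 ≃ₗ⁅ℝ⁆ 𝔫) : Prop :=
  ∀ (v : 𝔫) (c : ℝ), v ≠ 0 → L v = c • v → |c| ≠ 1

/-- `L` has sorted unstable spectrum: if `k < j` and `v ∈ 𝔫_(k)`, `w ∈ 𝔫_(j)` are unstable
eigenvectors with eigenvalues `cv`, `cw`, then `|cv| < |cw|`. -/
def SortedUnstableSpectrum {𝔫 : Type*} [LieRing 𝔫] [LieAlgebra ℝ 𝔫] (L : 𝔫 ≃ₗ⁅ℝ⁆ 𝔫) : Prop :=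
  ∀ (k j : ℕ), k < j → ∀ (v w : 𝔫) (cv cw : ℝ),
    v ≠ 0 → L v = cv • v → 1 < |cv| → v ∈ grading L ⊤ k →
    w ≠ 0 → L w = cw • w → 1 < |cw| → w ∈ grading L ⊤ j →
    |cv| < |cw|

/-- `L` has sorted spectrum: `L` has sorted unstable spectrum and `L⁻¹` has sorted unstable
spectrum. -/
def SortedSpectrum {𝔫 : Type*} [LieRing 𝔫] [LieAlgebra ℝ 𝔫] (L : 𝔫 ≃ₗ⁅ℝ⁆ 𝔫) : Prop :=
  SortedUnstableSpectrum L ∧ SortedUnstableSpectrum L.symm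

open Submodule

lemma lie_mem_of_mem_span {R 𝔤 : Type*} [CommRing R] [LieRing 𝔤] [LieAlgebra R 𝔤]
    {s t : Set 𝔤} {N : Submodule R 𝔤} (h : ∀ x ∈ s, ∀ y ∈ t, ⁅x, y⁆ ∈ N)
    {x y : 𝔤} (hx : x ∈ span R s) (hy : y ∈ span R t) : ⁅x, y⁆ ∈ N := by
  have hspan :
      map₂ (LieModule.toEnd R 𝔤 𝔤 : 𝔤 →ₗ[R] Module.End R 𝔤) (span R s) (span R t) ≤ N := by
    rw [map₂_span_span, span_le]
    rintro _ ⟨x, hx, y, hy, rfl⟩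
    exact h x hx y hy
  exact map₂_le.1 hspan x hx y hy

lemma lie_mem_of_sup_eq_top {R 𝔤 : Type*} [Semiring R] [LieRing 𝔤] [Module R 𝔤]
    {A B : Submodule R 𝔤} (hAB : A ⊔ B = ⊤) (hA : ∀ a ∈ A, ∀ x ∈ A, ⁅a, x⁆ ∈ A)
    (hB : ∀ b ∈ B, ∀ x ∈ A, ⁅b, x⁆ = 0) (z : 𝔤) {x : 𝔤} (hx : x ∈ A) : ⁅z, x⁆ ∈ A := by
  obtain ⟨a, ha, b, hb, rfl⟩ := mem_sup.1 (hAB ▸ mem_top : z ∈ A ⊔ B)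
  rw [add_lie, hB b hb x hx, add_zero]
  exact hA a ha x hx

section

variable {𝔫 : Type*} [LieRing 𝔫] [LieAlgebra ℝ 𝔫]

lemma lie_mem_lcsOf_top_succ (x : 𝔫) {y : 𝔫} {k : ℕ} (hy : y ∈ lcsOf ⊤ k) :
    ⁅x, y⁆ ∈ lcsOf ⊤ (k + 1) :=
  subset_span ⟨x, mem_top, y, hy, rfl⟩

lemma lcsOf_top_succ_le (k : ℕ) : lcsOf (⊤ : Submodule ℝ 𝔫) (k + 1) ≤ lcsOf ⊤ k := by
  induction k with
  | zero => exact le_top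
  | succ k ih =>
    refine span_le.2 ?_
    rintro _ ⟨x, -, y, hy, rfl⟩
    exact lie_mem_lcsOf_top_succ x (ih hy)

lemma lcsOf_top_antitone : Antitone (lcsOf (⊤ : Submodule ℝ 𝔫)) :=
  antitone_nat_of_succ_le lcsOf_top_succ_le

lemma lcsOf_top_le_lowerCentralSeries (k : ℕ) :
    lcsOf (⊤ : Submodule ℝ 𝔫) k ≤ (LieModule.lowerCentralSeries ℝ 𝔫 𝔫 k : Submodule ℝ 𝔫) := by
  induction k with
  | zero => simp [lcsOf]
  | succ k ih =>
    refine span_le.2 ?_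
    rintro _ ⟨x, -, y, hy, rfl⟩
    rw [LieModule.lowerCentralSeries_succ]
    exact LieSubmodule.lie_mem_lie (LieSubmodule.mem_top x) (ih hy)

lemma exists_mem_lcsOf_top_notMem_succ [LieRing.IsNilpotent 𝔫] {v : 𝔫} (hv : v ≠ 0) :
    ∃ k, v ∈ lcsOf ⊤ k ∧ v ∉ lcsOf ⊤ (k + 1) := by
  obtain ⟨N, hN⟩ := LieModule.IsNilpotent.nilpotent ℝ 𝔫 𝔫
  have hvN : v ∉ lcsOf ⊤ N := fun h ↦ hv (by simpa [hN] using lcsOf_top_le_lowerCentralSeries N h)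
  simpa using Nat.exists_not_and_succ_of_not_zero_of_exists (p := fun k ↦ v ∉ lcsOf ⊤ k)
    (by simp [lcsOf]) ⟨N, hvN⟩

section Eigenvectors

variable (L : 𝔫 ≃ₗ⁅ℝ⁆ 𝔫) {v w : 𝔫} {a b : ℝ}

lemma eigenvalue_ne_zero (hv : v ≠ 0) (hLv : L v = a • v) : a ≠ 0 := by
  rintro rfl
  exact hv (by simpa using hLv)

lemma symm_apply_eq_inv_smul (ha : a ≠ 0) (hLv : L v = a • v) : L.symm v = a⁻¹ • v := by
  rw [LieEquiv.symm_apply_eq, map_smul, hLv, smul_smul, inv_mul_cancel₀ ha, one_smul]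

variable {L}

lemma lie_eigenvector (hLv : L v = a • v) (hLw : L w = b • w) :
    L ⁅v, w⁆ = (a * b) • ⁅v, w⁆ := by
  rw [LieEquiv.map_lie, hLv, hLw, smul_lie, lie_smul, smul_smul]

lemma mem_grading_succ {A : Submodule ℝ 𝔫} {k : ℕ} (hv : v ≠ 0) (hLv : L v = a • v)
    (hk : v ∈ lcsOf A k) (hk' : v ∉ lcsOf A (k + 1)) : v ∈ grading L A (k + 1) :=
  subset_span ⟨⟨hv, a, hLv⟩, hk, hk'⟩

lemma SortedUnstableSpectrum.one_lt_abs_of_lie_ne_zero [LieRing.IsNilpotent 𝔫]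
    (hsort : SortedUnstableSpectrum L) (hLv : L v = a • v) (hw : w ≠ 0) (hLw : L w = b • w)
    (hb : 1 < |b|) (hvw : ⁅v, w⁆ ≠ 0) (hab : 1 < |a * b|) : 1 < |a| := by
  obtain ⟨k, hk, hk'⟩ := exists_mem_lcsOf_top_notMem_succ hw
  obtain ⟨m, hm, hm'⟩ := exists_mem_lcsOf_top_notMem_succ hvw
  have hkm : k < m := by
    by_contra! hmk
    exact hm' (lcsOf_top_antitone (by omega) (lie_mem_lcsOf_top_succ v hk))
  have hlt : |b| < |a| * |b| := by
    simpa only [abs_mul] using hsort (k + 1) (m + 1) (by omega) w ⁅v, w⁆ b (a * b)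
      hw hLw hb (mem_grading_succ hw hLw hk hk')
      hvw (lie_eigenvector hLv hLw) hab (mem_grading_succ hvw (lie_eigenvector hLv hLw) hm hm')
  exact (lt_mul_iff_one_lt_left (by linarith)).1 hlt

lemma lie_eq_zero_of_abs_lt_one_of_one_lt_abs [LieRing.IsNilpotent 𝔫]
    (hhyp : IsHyperbolic L) (hsort : SortedSpectrum L)
    (hv : v ≠ 0) (hLv : L v = a • v) (ha : |a| < 1)
    (hw : w ≠ 0) (hLw : L w = b • w) (hb : 1 < |b|) : ⁅v, w⁆ = 0 := by
  by_contra hvw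
  have ha0 := eigenvalue_ne_zero L hv hLv
  have hb0 := eigenvalue_ne_zero L hw hLw
  rcases (hhyp _ _ hvw (lie_eigenvector hLv hLw)).lt_or_gt with hab | hab
  · have hwv : ⁅w, v⁆ ≠ 0 := by rwa [← lie_skew, neg_ne_zero]
    have hainv : 1 < |a⁻¹| := by
      rw [abs_inv]; exact (one_lt_inv₀ (abs_pos.2 ha0)).2 ha
    have habinv : 1 < |b⁻¹ * a⁻¹| := by
      rw [← mul_inv, mul_comm, abs_inv]
      exact (one_lt_inv₀ (abs_pos.2 (mul_ne_zero ha0 hb0))).2 hab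
    have hbinv := hsort.2.one_lt_abs_of_lie_ne_zero (symm_apply_eq_inv_smul L hb0 hLw) hv
      (symm_apply_eq_inv_smul L ha0 hLv) hainv hwv habinv
    rw [abs_inv, one_lt_inv₀ (abs_pos.2 hb0)] at hbinv
    linarith
  · linarith [hsort.1.one_lt_abs_of_lie_ne_zero hLv hw hLw hb hvw hab]

end Eigenvectors

section EigenSpan

variable {L : 𝔫 ≃ₗ⁅ℝ⁆ 𝔫} {P Q R : ℝ → Prop}

def eigenSpan (L : 𝔫 ≃ₗ⁅ℝ⁆ 𝔫) (P : ℝ → Prop) : Submodule ℝ 𝔫 :=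
  span ℝ {v : 𝔫 | v ≠ 0 ∧ ∃ c : ℝ, L v = c • v ∧ P c}

lemma lie_mem_eigenSpan (hPQR : ∀ a b, P a → Q b → R (a * b)) {x y : 𝔫}
    (hx : x ∈ eigenSpan L P) (hy : y ∈ eigenSpan L Q) : ⁅x, y⁆ ∈ eigenSpan L R := by
  refine lie_mem_of_mem_span ?_ hx hy
  rintro v ⟨-, a, hLv, ha⟩ w ⟨-, b, hLw, hb⟩
  by_cases hvw : ⁅v, w⁆ = 0
  · rw [hvw]; exact zero_mem _
  · exact subset_span ⟨hvw, a * b, lie_eigenvector hLv hLw, hPQR a b ha hb⟩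

lemma eigenSpan_le_biSup_eigenspace :
    eigenSpan L P ≤ ⨆ c ∈ {c | P c}, Module.End.eigenspace (L : 𝔫 →ₗ[ℝ] 𝔫) c := by
  refine span_le.2 ?_
  rintro v ⟨-, c, hLv, hc⟩
  exact le_biSup (fun c ↦ Module.End.eigenspace (L : 𝔫 →ₗ[ℝ] 𝔫) c) hc
    (Module.End.mem_eigenspace_iff.2 hLv)

lemma disjoint_eigenSpan (hPQ : ∀ c, P c → ¬Q c) :
    Disjoint (eigenSpan L P) (eigenSpan L Q) :=
  ((Module.End.eigenspaces_iSupIndep _).disjoint_biSup_biSup (Set.disjoint_left.2 hPQ)).mono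
    eigenSpan_le_biSup_eigenspace eigenSpan_le_biSup_eigenspace

lemma eigenSpan_sup_eigenSpan_eq_top (hL : HasRealEigenbasis L)
    (hPQ : ∀ v c, v ≠ 0 → L v = c • v → P c ∨ Q c) : eigenSpan L P ⊔ eigenSpan L Q = ⊤ := by
  obtain ⟨n, e, c, he⟩ := hL
  rw [eq_top_iff, ← e.span_eq, span_le]
  rintro _ ⟨i, rfl⟩
  rcases hPQ _ _ (e.ne_zero i) (he i) with h | h
  · exact mem_sup_left (subset_span ⟨e.ne_zero i, c i, he i, h⟩)
  · exact mem_sup_right (subset_span ⟨e.ne_zero i, c i, he i, h⟩)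

end EigenSpan

end

theorem stable_bracket_unstable_eq_zero_general
    {𝔫 : Type*} [LieRing 𝔫] [LieAlgebra ℝ 𝔫]
    [LieRing.IsNilpotent 𝔫]
    (L : 𝔫 ≃ₗ⁅ℝ⁆ 𝔫) (hL : HasRealEigenbasis L)
    (hhyp : IsHyperbolic L) (hsort : SortedSpectrum L) :
    (∀ x ∈ stable L, ∀ y ∈ unstable L, ⁅x, y⁆ = 0) ∧
    (∀ z : 𝔫, ∀ x ∈ stable L, ⁅z, x⁆ ∈ stable L) ∧
    (∀ z : 𝔫, ∀ y ∈ unstable L, ⁅z, y⁆ ∈ unstable L) ∧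
    stable L ⊔ unstable L = ⊤ ∧
    stable L ⊓ unstable L = ⊥ := by
  have hsu : ∀ x ∈ stable L, ∀ y ∈ unstable L, ⁅x, y⁆ = 0 := by
    refine fun x hx y hy ↦ (mem_bot ℝ).1 (lie_mem_of_mem_span ?_ hx hy)
    rintro v ⟨hv, a, hLv, ha⟩ w ⟨hw, b, hLw, hb⟩
    exact (mem_bot ℝ).2 (lie_eq_zero_of_abs_lt_one_of_one_lt_abs hhyp hsort hv hLv ha hw hLw hb)
  have hss : ∀ x ∈ stable L, ∀ y ∈ stable L, ⁅x, y⁆ ∈ stable L := fun _ hx _ hy ↦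
    lie_mem_eigenSpan (fun a b ha hb ↦ by
      rw [abs_mul]; exact mul_lt_one_of_nonneg_of_lt_one_left (abs_nonneg a) ha hb.le) hx hy
  have huu : ∀ x ∈ unstable L, ∀ y ∈ unstable L, ⁅x, y⁆ ∈ unstable L := fun _ hx _ hy ↦
    lie_mem_eigenSpan (fun a b ha hb ↦ by
      rw [abs_mul]; exact one_lt_mul_of_lt_of_le ha hb.le) hx hy
  have htop : stable L ⊔ unstable L = ⊤ :=
    eigenSpan_sup_eigenSpan_eq_top hL fun v c hv hLv ↦ (hhyp v c hv hLv).lt_or_gt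
  refine ⟨hsu, fun z x hx ↦ ?_, fun z y hy ↦ ?_, htop,
    disjoint_iff.1 (disjoint_eigenSpan fun c h h' ↦ by linarith)⟩
  · exact lie_mem_of_sup_eq_top htop hss
      (fun y hy x hx ↦ by rw [← lie_skew, hsu x hx y hy, neg_zero]) z hx
  · exact lie_mem_of_sup_eq_top (sup_comm (stable L) _ ▸ htop) huu hsu z hy

/-- for a hyperbolic automorphism with real eigenbasis and sorted spectrum of a
finite-dimensional real nilpotent Lie algebra, `⁅𝔫^s, 𝔫^u⁆ = 0`; consequently both `𝔫^s` and
`𝔫^u` are ideals and `𝔫 = 𝔫^s ⊕ 𝔫^u` as an internal direct sum of Lie algebras. -/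
theorem stable_bracket_unstable_eq_zero
    {𝔫 : Type*} [LieRing 𝔫] [LieAlgebra ℝ 𝔫] [FiniteDimensional ℝ 𝔫]
    [LieRing.IsNilpotent 𝔫]
    (L : 𝔫 ≃ₗ⁅ℝ⁆ 𝔫) (hL : HasRealEigenbasis L)
    (hhyp : IsHyperbolic L) (hsort : SortedSpectrum L) :
    (∀ x ∈ stable L, ∀ y ∈ unstable L, ⁅x, y⁆ = 0) ∧
    (∀ z : 𝔫, ∀ x ∈ stable L, ⁅z, x⁆ ∈ stable L) ∧
    (∀ z : 𝔫, ∀ y ∈ unstable L, ⁅z, y⁆ ∈ unstable L) ∧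
    stable L ⊔ unstable L = ⊤ ∧
    stable L ⊓ unstable L = ⊥ :=
  stable_bracket_unstable_eq_zero_general L hL hhyp hsort
end

section
/- Let 𝔫 be a finite-dimensional real nilpotent Lie algebra and L : 𝔫 → 𝔫 an expanding Lie algebra automorphism admitting a real eigenbasis and with simple spectrum. Let v be an eigenvector of L whose eigenvalue λ₁ has the smallest modulus among all eigenvalues of L. Then for every eigenvector w of L that is linearly independent from v, if w ∈ 𝔫_(i) and λ_w is the eigenvalue of w, then the escape speed satisfies σ_w = |λ_w|^{1/i} > |λ₁| = σ_v. -/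
/-!
Eigenvectors of `L` lie in the span of the basis vectors with the same eigenvalue, and the bracket
of two eigenvectors is an eigenvector for the product of their eigenvalues. Writing `m = |λ₁|`,
it follows that for `i ≥ 2` the term `𝔫^i` lies in the span of the basis vectors whose
eigenvalues have modulus `> m^i`: for `i = 2` because `⁅b p, b p⁆ = 0` while distinct basis
vectors have distinct moduli `≥ m`, and then by induction on `i`. For `i = 1` the strict
inequality comes instead from `w` not being a multiple of `v`.
-/

open Submodule Set

section Eigenbasis

variable {K M ι : Type*} [Field K] [AddCommGroup M] [Module K M] {b : Module.Basis ι K M}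
  {f : M →ₗ[K] M} {c : ι → K}

theorem Module.Basis.repr_apply_of_eigen (hb : ∀ i, f (b i) = c i • b i) (u : M) (j : ι) :
    b.repr (f u) j = c j * b.repr u j := by
  have : (b.coord j).comp f = c j • b.coord j := b.ext fun i => by
    rcases eq_or_ne i j with rfl | hij
    · simp [hb]
    · simp [hb, hij]
  simpa using LinearMap.congr_fun this u

theorem Module.Basis.mem_span_image_of_apply_eq_smul (hb : ∀ i, f (b i) = c i • b i) {u : M}
    {μ : K} (hu : f u = μ • u) : u ∈ span K (b '' {j | c j = μ}) := by
  refine b.mem_span_image.2 fun j hj => ?_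
  have := b.repr_apply_of_eigen hb u j
  rw [hu, map_smul, Finsupp.smul_apply, smul_eq_mul] at this
  exact (mul_right_cancel₀ (Finsupp.mem_support_iff.1 hj) this).symm

theorem Module.Basis.exists_mem_eigenvalue_eq_of_mem_span_image (hb : ∀ i, f (b i) = c i • b i)
    {u : M} {μ : K} (hu0 : u ≠ 0) (hu : f u = μ • u) {S : Set ι}
    (huS : u ∈ span K (b '' S)) : ∃ j ∈ S, c j = μ := by
  obtain ⟨j, hj⟩ : (b.repr u).support.Nonempty := by simpa using hu0
  exact ⟨j, b.mem_span_image.1 huS hj,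
    b.mem_span_image.1 (b.mem_span_image_of_apply_eq_smul hb hu) hj⟩

theorem Module.Basis.exists_eigenvalue_eq (hb : ∀ i, f (b i) = c i • b i) {u : M} {μ : K}
    (hu0 : u ≠ 0) (hu : f u = μ • u) : ∃ j, c j = μ :=
  let ⟨j, _, hj⟩ := b.exists_mem_eigenvalue_eq_of_mem_span_image hb hu0 hu (S := univ)
    (by simp [b.span_eq])
  ⟨j, hj⟩

theorem Module.Basis.mem_span_singleton_of_apply_eq_smul (hb : ∀ i, f (b i) = c i • b i)
    (hc : Function.Injective c) {u : M} {j : ι} (hu : f u = c j • u) : u ∈ K ∙ b j := by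
  have h := b.mem_span_image_of_apply_eq_smul hb hu
  rwa [show {i | c i = c j} = {j} from Set.ext fun i => hc.eq_iff, Set.image_singleton] at h

theorem Module.Basis.not_linearIndependent_of_apply_eq_smul (hb : ∀ i, f (b i) = c i • b i)
    (hc : Function.Injective c) {v w : M} {μ : K} (hv : f v = μ • v) (hw : f w = μ • w) :
    ¬LinearIndependent K ![v, w] := by
  intro hind
  have hv0 : v ≠ 0 := by simpa using hind.ne_zero 0
  obtain ⟨j, rfl⟩ := b.exists_eigenvalue_eq hb hv0 hv
  obtain ⟨a, rfl⟩ := mem_span_singleton.1 (b.mem_span_singleton_of_apply_eq_smul hb hc hv)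
  obtain ⟨a', rfl⟩ := mem_span_singleton.1 (b.mem_span_singleton_of_apply_eq_smul hb hc hw)
  have ha : a ≠ 0 := by rintro rfl; simp at hv0
  exact (LinearIndependent.pair_iff' hv0).1 hind (a' / a)
    (by rw [smul_smul, div_mul_cancel₀ _ ha])

end Eigenbasis

theorem Module.Basis.abs_lt_abs_of_linearIndependent {V ι : Type*} [AddCommGroup V] [Module ℝ V]
    {b : Module.Basis ι ℝ V} {f : V →ₗ[ℝ] V} {c : ι → ℝ} (hb : ∀ i, f (b i) = c i • b i)
    (hsimple : Function.Injective fun i => |c i|) {v w : V} {μ ν : ℝ} (hv : f v = μ • v)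
    (hw : f w = ν • w) (hind : LinearIndependent ℝ ![v, w]) (hle : |μ| ≤ |ν|) : |μ| < |ν| := by
  refine hle.lt_of_ne fun h => ?_
  obtain ⟨i, rfl⟩ := b.exists_eigenvalue_eq hb (by simpa using hind.ne_zero 0) hv
  obtain ⟨j, rfl⟩ := b.exists_eigenvalue_eq hb (by simpa using hind.ne_zero 1) hw
  obtain rfl : i = j := hsimple h
  exact b.not_linearIndependent_of_apply_eq_smul hb (fun i j h => hsimple (congrArg abs h)) hv hw
    hind

section LowerCentralSeries

variable {𝔫 : Type*} [LieRing 𝔫] [LieAlgebra ℝ 𝔫]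

theorem bracketSpan_mono {A A' B B' : Submodule ℝ 𝔫} (hA : A ≤ A') (hB : B ≤ B') :
    bracketSpan A B ≤ bracketSpan A' B' :=
  span_mono fun _ ⟨x, hx, y, hy, hz⟩ => ⟨x, hA hx, y, hB hy, hz⟩

theorem bracketSpan_span_span (s t : Set 𝔫) :
    bracketSpan (span ℝ s) (span ℝ t) = span ℝ (image2 (⁅·, ·⁆) s t) := by
  have h := map₂_span_span ℝ (LieModule.toEnd ℝ 𝔫 𝔫 : 𝔫 →ₗ[ℝ] Module.End ℝ 𝔫) s t
  rw [map₂_eq_span_image2] at h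
  simp only [LieHom.coe_toLinearMap, LieModule.toEnd_apply_apply] at h
  rw [← h, bracketSpan]
  congr 1
  ext z
  simp [eq_comm]

theorem grading_succ_le_lcsOf (L : 𝔫 ≃ₗ⁅ℝ⁆ 𝔫) (A : Submodule ℝ 𝔫) (i : ℕ) :
    grading L A (i + 1) ≤ lcsOf A i :=
  span_le.2 fun _ hu => hu.2.1

theorem LieHom.map_lie_eq_mul_smul {R L : Type*} [CommRing R] [LieRing L] [LieAlgebra R L]
    (f : L →ₗ⁅R⁆ L) {x y : L} {a a' : R} (hx : f x = a • x) (hy : f y = a' • y) :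
    f ⁅x, y⁆ = (a * a') • ⁅x, y⁆ := by
  rw [f.map_lie, hx, hy, smul_lie, lie_smul, smul_smul]

end LowerCentralSeries

section EigenvalueBounds

variable {𝔫 ι : Type*} [LieRing 𝔫] [LieAlgebra ℝ 𝔫] {b : Module.Basis ι ℝ 𝔫}
  {f : 𝔫 →ₗ⁅ℝ⁆ 𝔫} {c : ι → ℝ}

theorem bracketSpan_span_image_le (hb : ∀ i, f (b i) = c i • b i) {S T R : Set ι}
    (h : ∀ p ∈ S, ∀ q ∈ T, p ≠ q → ∀ j, c j = c p * c q → j ∈ R) :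
    bracketSpan (span ℝ (b '' S)) (span ℝ (b '' T)) ≤ span ℝ (b '' R) := by
  rw [bracketSpan_span_span, span_le]
  rintro _ ⟨_, ⟨p, hp, rfl⟩, _, ⟨q, hq, rfl⟩, rfl⟩
  rcases eq_or_ne p q with rfl | hpq
  · simp
  · exact span_mono (image_mono fun j hj => h p hp q hq hpq j hj)
      (b.mem_span_image_of_apply_eq_smul (f := f.toLinearMap) hb
        (f.map_lie_eq_mul_smul (hb p) (hb q)))

theorem lcsOf_top_succ_le_span_pow_lt_abs (hb : ∀ i, f (b i) = c i • b i)
    (hsimple : Function.Injective fun i => |c i|) {m : ℝ} (hm : 0 < m)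
    (hmin : ∀ i, m ≤ |c i|) :
    ∀ k, lcsOf (⊤ : Submodule ℝ 𝔫) (k + 1) ≤ span ℝ (b '' {j | m ^ (k + 2) < |c j|})
  | 0 => by
    have := bracketSpan_span_image_le hb (S := univ) (T := univ) (R := {j | m ^ 2 < |c j|})
      fun p _ q _ hpq j hj => by
        have hne : |c p| ≠ |c q| := hsimple.ne hpq
        rw [mem_ofPred_eq, hj, abs_mul]
        rcases hne.lt_or_gt with h | h <;> nlinarith [hmin p, hmin q]
    rwa [image_univ, b.span_eq] at this
  | k + 1 => calc
    lcsOf (⊤ : Submodule ℝ 𝔫) (k + 2) = bracketSpan ⊤ (lcsOf ⊤ (k + 1)) := rfl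
    _ ≤ bracketSpan (span ℝ (b '' univ)) (span ℝ (b '' {j | m ^ (k + 2) < |c j|})) :=
      bracketSpan_mono (by rw [image_univ, b.span_eq])
        (lcsOf_top_succ_le_span_pow_lt_abs hb hsimple hm hmin k)
    _ ≤ _ := bracketSpan_span_image_le hb fun p _ q hq _ j hj => by
      rw [mem_ofPred_eq, hj, abs_mul, pow_succ']
      exact mul_lt_mul' (hmin p) hq (by positivity) (hm.trans_le (hmin p))

theorem pow_lt_abs_of_mem_lcsOf (hb : ∀ i, f (b i) = c i • b i)
    (hsimple : Function.Injective fun i => |c i|) {m : ℝ} (hm : 0 < m)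
    (hmin : ∀ i, m ≤ |c i|) {w : 𝔫} {μ : ℝ} (hw : w ≠ 0) (hfw : f w = μ • w) {k : ℕ}
    (hwk : w ∈ lcsOf ⊤ (k + 1)) : m ^ (k + 2) < |μ| := by
  obtain ⟨j, hj, rfl⟩ := b.exists_mem_eigenvalue_eq_of_mem_span_image (f := f.toLinearMap) hb hw
    hfw (lcsOf_top_succ_le_span_pow_lt_abs hb hsimple hm hmin k hwk)
  exact hj

end EigenvalueBounds

theorem escape_speed_of_independent_eigvec_gt_general
    {𝔫 : Type*} [LieRing 𝔫] [LieAlgebra ℝ 𝔫]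
    (L : 𝔫 ≃ₗ⁅ℝ⁆ 𝔫)
    (n : ℕ) (b : Module.Basis (Fin n) ℝ 𝔫) (c : Fin n → ℝ)
    (hb : ∀ i, L (b i) = c i • b i)
    (hsimple : Function.Injective fun i => |c i|)
    (v : 𝔫) (lam₁ : ℝ) (hv : v ≠ 0) (hveig : L v = lam₁ • v)
    (hmin : ∀ (u : 𝔫) (cu : ℝ), u ≠ 0 → L u = cu • u → |lam₁| ≤ |cu|) :
    ∀ (w : 𝔫) (lamw : ℝ) (i : ℕ), 1 ≤ i →
      w ≠ 0 → L w = lamw • w → LinearIndependent ℝ ![v, w] → w ∈ grading L ⊤ i →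
      |lam₁| < |lamw| ^ ((1 : ℝ) / i) := by
  intro w lamw i hi hw hweig hind hwgr
  have hm : 0 < |lam₁| := abs_pos.2 fun h => hv (L.injective (by simp [hveig, h]))
  have hmin_basis : ∀ j, |lam₁| ≤ |c j| := fun j => hmin _ _ (b.ne_zero j) (hb j)
  obtain ⟨k, rfl⟩ : ∃ k, i = k + 1 := ⟨i - 1, by omega⟩
  have hwk : w ∈ lcsOf ⊤ k := grading_succ_le_lcsOf L ⊤ k hwgr
  suffices |lam₁| ^ (k + 1) < |lamw| by
    rwa [one_div, Real.lt_rpow_inv_iff_of_pos (abs_nonneg _) (abs_nonneg _) (by positivity),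
      Real.rpow_natCast]
  rcases k with _ | k
  · simpa using b.abs_lt_abs_of_linearIndependent (f := (L : 𝔫 →ₗ⁅ℝ⁆ 𝔫)) hb hsimple hveig
      hweig hind (hmin w lamw hw hweig)
  · exact pow_lt_abs_of_mem_lcsOf (f := L) hb hsimple hm hmin_basis hw hweig hwk

/-- let `L` be an expanding automorphism with simple spectrum of a
finite-dimensional real nilpotent Lie algebra, given by a real eigenbasis `b` with eigenvalues
`c`, whose moduli are pairwise distinct (simple spectrum) and all `> 1` (expanding). If `v` is
an eigenvector whose eigenvalue `λ₁` has the smallest modulus among all eigenvalues of `L`,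
then every eigenvector `w` linearly independent from `v`, lying in `𝔫_(i)` with eigenvalue
`λ_w`, has escape speed `σ_w = |λ_w|^(1/i) > |λ₁| = σ_v`. -/
theorem escape_speed_of_independent_eigvec_gt
    {𝔫 : Type*} [LieRing 𝔫] [LieAlgebra ℝ 𝔫] [FiniteDimensional ℝ 𝔫]
    [LieRing.IsNilpotent 𝔫]
    (L : 𝔫 ≃ₗ⁅ℝ⁆ 𝔫)
    (n : ℕ) (b : Module.Basis (Fin n) ℝ 𝔫) (c : Fin n → ℝ)
    (hb : ∀ i, L (b i) = c i • b i)
    (hexp : ∀ (u : 𝔫) (cu : ℝ), u ≠ 0 → L u = cu • u → 1 < |cu|)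
    (hsimple : Function.Injective fun i => |c i|)
    (v : 𝔫) (lam₁ : ℝ) (hv : v ≠ 0) (hveig : L v = lam₁ • v)
    (hmin : ∀ (u : 𝔫) (cu : ℝ), u ≠ 0 → L u = cu • u → |lam₁| ≤ |cu|) :
    ∀ (w : 𝔫) (lamw : ℝ) (i : ℕ), 1 ≤ i →
      w ≠ 0 → L w = lamw • w → LinearIndependent ℝ ![v, w] → w ∈ grading L ⊤ i →
      |lam₁| < |lamw| ^ ((1 : ℝ) / i) :=
  escape_speed_of_independent_eigvec_gt_general L n b c hb hsimple v lam₁ hv hveig hmin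
end

section
/- Let X be a compact topological space, L : X → X a homeomorphism, φ : X → ℝ a continuous function, and λ_u, λ_w nonzero real numbers with |λ_u| > |λ_w|. Then the series ω(x) = −λ_u^{−1} Σ_{m ≥ 1} (λ_w/λ_u)^{m−1} φ(L^{−m}(x)) converges absolutely and uniformly on X, the resulting function ω : X → ℝ is continuous, and it satisfies φ(x) + λ_u·ω(L(x)) = λ_w·ω(x) for all x ∈ X. -/
open Filter

/-!
Since `|λ_w / λ_u| < 1` and `φ` is bounded on the compact space `X`, the terms of the series are
dominated by a convergent geometric series, which gives absolute and uniform convergence and hence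
continuity of `ω`. Writing `r = λ_w / λ_u` and `ψ(y) = Σ_{m ≥ 0} rᵐ φ(L^{-m} y)`, we have
`ω = -λ_u⁻¹ ψ ∘ L⁻¹`, and splitting off the term `m = 0` gives `ψ = φ + r ψ ∘ L⁻¹`, which is the
cohomological equation.
-/

section GeomOrbitSeries

variable {X : Type*} {T : X → X} {φ : X → ℝ} {c r C : ℝ}

/-- `c * r ^ m * φ (T^[m + 1] x)` is definitionally `geomOrbitTerm T φ c r m (T x)`. -/
def geomOrbitTerm (T : X → X) (φ : X → ℝ) (c r : ℝ) (m : ℕ) (x : X) : ℝ :=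
  c * r ^ m * φ (T^[m] x)

theorem abs_geomOrbitTerm_le (hφ : ∀ y, |φ y| ≤ C) (m : ℕ) (x : X) :
    |geomOrbitTerm T φ c r m x| ≤ |c| * |r| ^ m * C := by
  rw [geomOrbitTerm, abs_mul, abs_mul, abs_pow]
  gcongr
  exact hφ _

theorem summable_geometric_bound (hr : |r| < 1) : Summable fun m : ℕ => |c| * |r| ^ m * C :=
  ((summable_geometric_of_lt_one (abs_nonneg r) hr).mul_left |c|).mul_right C

theorem summable_abs_geomOrbitTerm (hφ : ∀ y, |φ y| ≤ C) (hr : |r| < 1) (x : X) :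
    Summable fun m => |geomOrbitTerm T φ c r m x| :=
  (summable_geometric_bound hr).of_nonneg_of_le (fun _ => abs_nonneg _)
    fun m => abs_geomOrbitTerm_le hφ m x

theorem tendstoUniformly_tsum_geomOrbitTerm (hφ : ∀ y, |φ y| ≤ C) (hr : |r| < 1) :
    TendstoUniformly (fun N x => ∑ m ∈ Finset.range N, geomOrbitTerm T φ c r m x)
      (fun x => ∑' m, geomOrbitTerm T φ c r m x) atTop :=
  tendstoUniformly_tsum_nat (summable_geometric_bound hr) (abs_geomOrbitTerm_le hφ)

theorem continuous_tsum_geomOrbitTerm [TopologicalSpace X] (hT : Continuous T)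
    (hφc : Continuous φ) (hφ : ∀ y, |φ y| ≤ C) (hr : |r| < 1) :
    Continuous fun x => ∑' m, geomOrbitTerm T φ c r m x :=
  continuous_tsum (fun m => continuous_const.mul (hφc.comp (hT.iterate m)))
    (summable_geometric_bound hr) (abs_geomOrbitTerm_le hφ)

theorem tsum_geomOrbitTerm_eq_add {x : X} (hs : Summable fun m => geomOrbitTerm T φ c r m x) :
    ∑' m, geomOrbitTerm T φ c r m x = c * φ x + r * ∑' m, geomOrbitTerm T φ c r m (T x) := by
  have hsucc : ∀ m, geomOrbitTerm T φ c r (m + 1) x = r * geomOrbitTerm T φ c r m (T x) := by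
    intro m
    simp only [geomOrbitTerm, Function.iterate_succ_apply]
    ring
  rw [hs.tsum_eq_zero_add, ← tsum_mul_left, funext hsucc]
  simp [geomOrbitTerm]

end GeomOrbitSeries

theorem cohomological_equation_backward_solution_general
    {X : Type*} [TopologicalSpace X] [CompactSpace X]
    (L : X ≃ₜ X)
    (φ : X → ℝ) (hφ : Continuous φ)
    (lamu lamw : ℝ) (hlt : |lamw| < |lamu|) :
    (∀ x : X, Summable fun m : ℕ =>
      |(-lamu⁻¹) * (lamw / lamu) ^ m * φ ((⇑L.symm)^[m + 1] x)|) ∧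
    Continuous (fun x : X =>
      ∑' m : ℕ, (-lamu⁻¹) * (lamw / lamu) ^ m * φ ((⇑L.symm)^[m + 1] x)) ∧
    TendstoUniformly
      (fun (N : ℕ) (x : X) =>
        ∑ m ∈ Finset.range N, (-lamu⁻¹) * (lamw / lamu) ^ m * φ ((⇑L.symm)^[m + 1] x))
      (fun x : X => ∑' m : ℕ, (-lamu⁻¹) * (lamw / lamu) ^ m * φ ((⇑L.symm)^[m + 1] x))
      atTop ∧
    (∀ x : X,
      φ x + lamu * (∑' m : ℕ, (-lamu⁻¹) * (lamw / lamu) ^ m * φ ((⇑L.symm)^[m + 1] (L x)))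
        = lamw * ∑' m : ℕ, (-lamu⁻¹) * (lamw / lamu) ^ m * φ ((⇑L.symm)^[m + 1] x)) := by
  have hlamu : lamu ≠ 0 := abs_pos.mp ((abs_nonneg lamw).trans_lt hlt)
  have hr : |lamw / lamu| < 1 := by
    rwa [abs_div, div_lt_one (abs_pos.mpr hlamu)]
  obtain ⟨C, hC⟩ := (isCompact_range hφ.abs).bddAbove
  have hφC : ∀ y, |φ y| ≤ C := fun y => hC ⟨y, rfl⟩
  refine ⟨fun x => summable_abs_geomOrbitTerm hφC hr (L.symm x),
    (continuous_tsum_geomOrbitTerm L.symm.continuous hφ hφC hr).comp L.symm.continuous,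
    (tendstoUniformly_tsum_geomOrbitTerm hφC hr).comp L.symm, fun x => ?_⟩
  have hrec := tsum_geomOrbitTerm_eq_add (T := L.symm) (c := -lamu⁻¹) (r := lamw / lamu)
    (summable_abs_geomOrbitTerm hφC hr x).of_abs
  change φ x + lamu * ∑' m, geomOrbitTerm L.symm φ _ _ m (L.symm (L x)) =
    lamw * ∑' m, geomOrbitTerm L.symm φ (-lamu⁻¹) (lamw / lamu) m (L.symm x)
  rw [L.symm_apply_apply, hrec]
  generalize ∑' m, geomOrbitTerm L.symm φ (-lamu⁻¹) (lamw / lamu) m (L.symm x) = ω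
  field_simp
  ring

/-- for a homeomorphism `L` of a compact space `X`, continuous `φ : X → ℝ`, and
nonzero reals `λ_u, λ_w` with `|λ_u| > |λ_w|`, the series
`ω(x) = -λ_u⁻¹ Σ_{m ≥ 1} (λ_w/λ_u)^{m-1} φ(L^{-m} x)` converges absolutely and uniformly,
`ω` is continuous, and `φ(x) + λ_u·ω(L x) = λ_w·ω(x)` for all `x`. -/
theorem cohomological_equation_backward_solution
    {X : Type*} [TopologicalSpace X] [CompactSpace X]
    (L : X ≃ₜ X)
    (φ : X → ℝ) (hφ : Continuous φ)
    (lamu lamw : ℝ) (hu : lamu ≠ 0) (hw : lamw ≠ 0) (hlt : |lamw| < |lamu|) :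
    (∀ x : X, Summable fun m : ℕ =>
      |(-lamu⁻¹) * (lamw / lamu) ^ m * φ ((⇑L.symm)^[m + 1] x)|) ∧
    Continuous (fun x : X =>
      ∑' m : ℕ, (-lamu⁻¹) * (lamw / lamu) ^ m * φ ((⇑L.symm)^[m + 1] x)) ∧
    TendstoUniformly
      (fun (N : ℕ) (x : X) =>
        ∑ m ∈ Finset.range N, (-lamu⁻¹) * (lamw / lamu) ^ m * φ ((⇑L.symm)^[m + 1] x))
      (fun x : X => ∑' m : ℕ, (-lamu⁻¹) * (lamw / lamu) ^ m * φ ((⇑L.symm)^[m + 1] x))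
      atTop ∧
    (∀ x : X,
      φ x + lamu * (∑' m : ℕ, (-lamu⁻¹) * (lamw / lamu) ^ m * φ ((⇑L.symm)^[m + 1] (L x)))
        = lamw * ∑' m : ℕ, (-lamu⁻¹) * (lamw / lamu) ^ m * φ ((⇑L.symm)^[m + 1] x)) :=
  cohomological_equation_backward_solution_general L φ hφ lamu lamw hlt
end
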